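/- Let W ~ N_p(0, σ²C⁻¹), C symmetric positive definite, H q×p of rank q, ξ ∈ ℝ^q, δ = C⁻¹Hᵀ(HC⁻¹Hᵀ)⁻¹ξ, A = C⁻¹ − C⁻¹Hᵀ(HC⁻¹Hᵀ)⁻¹HC⁻¹. Then W^(2) = W − C⁻¹Hᵀ(HC⁻¹Hᵀ)⁻¹(HW + ξ) is Gaussian with mean −δ and covariance σ²A. -/

import Mathlib

open MeasureTheory ProbabilityTheory Matrix

/-- Standard Gaussian measure on `Fin n → ℝ`. -/
noncomputable def stdGaussian (n : ℕ) : Measure (Fin n → ℝ) :=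
  Measure.pi fun _ => gaussianReal 0 1

/-- Multivariate Gaussian measure on `Fin n → ℝ` with mean `m` and covariance
factor `B` (covariance matrix `B * Bᵀ`): the law of `m + B z` for standard Gaussian `z`. -/
noncomputable def multiGaussian {n : ℕ} (m : Fin n → ℝ) (B : Matrix (Fin n) (Fin n) ℝ) :
    Measure (Fin n → ℝ) :=
  (stdGaussian n).map (fun z => m + B.mulVec z)

/-- Noncentral chi-square distribution with `ν` degrees of freedom and
noncentrality parameter `t ≥ 0`: the law of `‖z + μ‖²` where `z` is standard Gaussian
in dimension `ν` and `μ` is a fixed vector with `‖μ‖² = t`. -/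
noncomputable def ncChiSq (ν : ℕ) (t : ℝ) : Measure ℝ :=
  (stdGaussian ν).map (fun z => ∑ i, (z i + if i.val = 0 then Real.sqrt t else 0) ^ 2)

/-- Central chi-square distribution with `ν` degrees of freedom. -/
noncomputable def chiSq (ν : ℕ) : Measure ℝ := ncChiSq ν 0

/-- cdf of the central chi-square with `ν` degrees of freedom. -/
noncomputable def chiSqCDF (ν : ℕ) (c : ℝ) : ℝ := (chiSq ν (Set.Iic c)).toReal

/-- cdf of the noncentral chi-square with `ν` d.f. and noncentrality `t`. -/
noncomputable def ncChiSqCDF (ν : ℕ) (c t : ℝ) : ℝ := (ncChiSq ν t (Set.Iic c)).toReal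

/-! Writing `K = C⁻¹Hᵀ(HC⁻¹Hᵀ)⁻¹` and `L = 1 - KH`, the restricted estimator is the affine image
`W⁽²⁾ = -Kξ + LW` of `W`, so it is Gaussian with mean `-Kξ = -δ` and covariance factor `LB`.
Since `L` is a projection, self-adjoint for the inner product defined by `C`, the covariance
`L(σ²C⁻¹)Lᵀ` collapses to `σ²(C⁻¹ - KHC⁻¹) = σ²A`. Full row rank of `H` makes `HC⁻¹Hᵀ` positive
definite, hence invertible. -/

namespace Matrix

variable {R : Type*} {m n : Type*} [Fintype m] [Fintype n]

theorem vecMul_injective_of_rank_eq_card [Field R] {A : Matrix m n R}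
    (h : A.rank = Fintype.card m) : Function.Injective A.vecMul := by
  rw [vecMul_injective_iff, linearIndependent_iff_card_eq_finrank_span, Set.finrank,
    ← rank_eq_finrank_span_row, h]

theorem PosDef.mul_mul_transpose_of_rank_eq_card {A : Matrix n n ℝ} (hA : A.PosDef)
    {B : Matrix m n ℝ} (hB : B.rank = Fintype.card m) : (B * A * Bᵀ).PosDef := by
  simpa only [conjTranspose_eq_transpose_of_trivial] using
    hA.mul_mul_conjTranspose_same (vecMul_injective_of_rank_eq_card hB)

theorem PosDef.transpose_inv [DecidableEq n] {A : Matrix n n ℝ} (hA : A.PosDef) :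
    (A⁻¹)ᵀ = A⁻¹ := by
  simpa only [conjTranspose_eq_transpose_of_trivial] using hA.inv.isHermitian.eq

theorem measurable_mulVec (A : Matrix m n ℝ) : Measurable A.mulVec :=
  (continuous_const.matrix_mulVec continuous_id).measurable

variable [DecidableEq m] [DecidableEq n]

/-- The projection onto `ker H` along the range of `G Hᵀ`. -/
noncomputable def constraintProjection [CommRing R] (G : Matrix n n R) (H : Matrix m n R) :
    Matrix n n R :=
  1 - G * Hᵀ * (H * G * Hᵀ)⁻¹ * H

theorem constraintProjection_mul_mul_transpose [CommRing R] {G : Matrix n n R} (hG : Gᵀ = G)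
    {H : Matrix m n R} (hS : IsUnit (H * G * Hᵀ).det) :
    constraintProjection G H * G * (constraintProjection G H)ᵀ
      = G - G * Hᵀ * (H * G * Hᵀ)⁻¹ * H * G := by
  unfold constraintProjection
  set S := H * G * Hᵀ with hS_def
  have hSinv : (S⁻¹)ᵀ = S⁻¹ := by
    rw [transpose_nonsing_inv, hS_def, transpose_mul, transpose_mul, transpose_transpose, hG,
      Matrix.mul_assoc]
  have hcancel (X : Matrix m n R) : S⁻¹ * (H * (G * (Hᵀ * X))) = X := by
    rw [← Matrix.mul_assoc G, ← Matrix.mul_assoc H, ← Matrix.mul_assoc H, ← hS_def,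
      ← Matrix.mul_assoc, nonsing_inv_mul _ hS, Matrix.one_mul]
  clear_value S
  simp only [transpose_sub, transpose_one, transpose_mul, transpose_transpose, hG, hSinv,
    Matrix.sub_mul, Matrix.mul_sub, Matrix.one_mul, Matrix.mul_one, Matrix.mul_assoc, hcancel]
  abel

end Matrix

instance isProbabilityMeasure_stdGaussian (n : ℕ) :
    IsProbabilityMeasure (_root_.stdGaussian n) := by
  unfold _root_.stdGaussian
  infer_instance

instance isProbabilityMeasure_multiGaussian {n : ℕ} (m : Fin n → ℝ)
    (B : Matrix (Fin n) (Fin n) ℝ) :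
    IsProbabilityMeasure (multiGaussian m B) :=
  Measure.isProbabilityMeasure_map (B.measurable_mulVec.const_add m).aemeasurable

theorem multiGaussian_map_affine {n : ℕ} (m a : Fin n → ℝ) (A B : Matrix (Fin n) (Fin n) ℝ) :
    (multiGaussian m B).map (fun w => a + A *ᵥ w) = multiGaussian (a + A *ᵥ m) (A * B) := by
  rw [multiGaussian, Measure.map_map (A.measurable_mulVec.const_add a)
    (B.measurable_mulVec.const_add m)]
  congr 1
  funext z
  simp only [Function.comp_apply, mulVec_add, mulVec_mulVec, add_assoc]

theorem map_affine_of_map_eq_multiGaussian {Ω : Type*} [MeasurableSpace Ω] {P : Measure Ω}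
    {n : ℕ} {W : Ω → Fin n → ℝ} {m : Fin n → ℝ} {B : Matrix (Fin n) (Fin n) ℝ}
    (hW : P.map W = multiGaussian m B) (a : Fin n → ℝ) (A : Matrix (Fin n) (Fin n) ℝ) :
    P.map (fun ω => a + A *ᵥ W ω) = multiGaussian (a + A *ᵥ m) (A * B) := by
  have hWae : AEMeasurable W P :=
    .of_map_ne_zero (hW ▸ IsProbabilityMeasure.ne_zero _)
  rw [← multiGaussian_map_affine, ← hW, AEMeasurable.map_map_of_aemeasurable _ hWae]
  · rfl
  · exact (A.measurable_mulVec.const_add a).aemeasurable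

theorem restricted_estimator_gaussian_general {p q : ℕ}
    {Ω : Type*} [MeasurableSpace Ω] (P : Measure Ω)
    (σ : ℝ)
    (C : Matrix (Fin p) (Fin p) ℝ) (hC : C.PosDef)
    (H : Matrix (Fin q) (Fin p) ℝ) (hH : H.rank = q) (ξ : Fin q → ℝ)
    (W : Ω → Fin p → ℝ)
    (B : Matrix (Fin p) (Fin p) ℝ) (hB : B * Bᵀ = (σ ^ 2) • C⁻¹)
    (hW : Measure.map W P = multiGaussian 0 B) :
    ∃ B' : Matrix (Fin p) (Fin p) ℝ,
      B' * B'ᵀ = (σ ^ 2) • (C⁻¹ - C⁻¹ * Hᵀ * (H * C⁻¹ * Hᵀ)⁻¹ * H * C⁻¹) ∧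
      Measure.map
          (fun ω => W ω - (C⁻¹ * Hᵀ * (H * C⁻¹ * Hᵀ)⁻¹).mulVec (H.mulVec (W ω) + ξ)) P
        = multiGaussian (-(C⁻¹ * Hᵀ * (H * C⁻¹ * Hᵀ)⁻¹).mulVec ξ) B' := by
  have hS : IsUnit (H * C⁻¹ * Hᵀ).det :=
    (hC.inv.mul_mul_transpose_of_rank_eq_card (by rwa [Fintype.card_fin])).det_pos.ne'.isUnit
  refine ⟨constraintProjection C⁻¹ H * B, ?_, ?_⟩
  · rw [transpose_mul, Matrix.mul_assoc, ← Matrix.mul_assoc B, hB, Matrix.smul_mul,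
      Matrix.mul_smul, ← Matrix.mul_assoc,
      constraintProjection_mul_mul_transpose hC.transpose_inv hS]
  · have haffine : (fun ω => W ω - (C⁻¹ * Hᵀ * (H * C⁻¹ * Hᵀ)⁻¹) *ᵥ (H *ᵥ W ω + ξ))
        = fun ω => -((C⁻¹ * Hᵀ * (H * C⁻¹ * Hᵀ)⁻¹) *ᵥ ξ)
            + constraintProjection C⁻¹ H *ᵥ W ω := by
      funext ω
      simp only [constraintProjection, sub_mulVec, one_mulVec, mulVec_add, mulVec_mulVec]
      abel
    rw [haffine, map_affine_of_map_eq_multiGaussian hW, mulVec_zero, add_zero]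

theorem restricted_estimator_gaussian {p q : ℕ} (hqp : q ≤ p)
    {Ω : Type*} [MeasurableSpace Ω] (P : Measure Ω) [IsProbabilityMeasure P]
    (σ : ℝ) (hσ : 0 < σ)
    (C : Matrix (Fin p) (Fin p) ℝ) (hC : C.PosDef) (hCsymm : C.IsSymm)
    (H : Matrix (Fin q) (Fin p) ℝ) (hH : H.rank = q) (ξ : Fin q → ℝ)
    (W : Ω → Fin p → ℝ) (hWmeas : Measurable W)
    (B : Matrix (Fin p) (Fin p) ℝ) (hB : B * Bᵀ = (σ ^ 2) • C⁻¹)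
    (hW : Measure.map W P = multiGaussian 0 B) :
    ∃ B' : Matrix (Fin p) (Fin p) ℝ,
      B' * B'ᵀ = (σ ^ 2) • (C⁻¹ - C⁻¹ * Hᵀ * (H * C⁻¹ * Hᵀ)⁻¹ * H * C⁻¹) ∧
      Measure.map
          (fun ω => W ω - (C⁻¹ * Hᵀ * (H * C⁻¹ * Hᵀ)⁻¹).mulVec (H.mulVec (W ω) + ξ)) P
        = multiGaussian (-(C⁻¹ * Hᵀ * (H * C⁻¹ * Hᵀ)⁻¹).mulVec ξ) B' :=
  restricted_estimator_gaussian_general P σ C hC H hH ξ W B hB hW
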